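/- Uniform convergence of multivariate Bernstein polynomials (Weierstrass on the simplex): if $F: \mathcal{S} \to \mathbb{R}$ is continuous on the $d$-dimensional simplex $\mathcal{S}$, then $\sup_{x \in \mathcal{S}} |F_m^\star(x) - F(x)| \to 0$ as $m \to \infty$, where $F_m^\star(x) = \sum_{k \in \mathbb{N}_0^d \cap m\mathcal{S}} F(k/m) P_{k,m}(x)$. -/

import Mathlib

open MeasureTheory Finset

/-- The d-dimensional unit simplex. -/
def simplexSet (d : ℕ) : Set (Fin d → ℝ) :=
  {x | (∀ i, 0 ≤ x i ∧ x i ≤ 1) ∧ ∑ i, x i ≤ 1}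

/-- The lattice points of the discrete simplex `ℕ₀^d ∩ mS`. -/
def grid (d m : ℕ) : Finset (Fin d → ℕ) :=
  (Finset.Icc 0 (fun _ => m)).filter (fun k => ∑ i, k i ≤ m)

/-- Multinomial(m, x) probability mass at k. -/
noncomputable def Pw (d m : ℕ) (k : Fin d → ℕ) (x : Fin d → ℝ) : ℝ :=
  ((m.factorial : ℝ) / ((m - ∑ i, k i).factorial * ∏ i, (k i).factorial)) *
    (1 - ∑ i, x i) ^ (m - ∑ i, k i) * ∏ i, x i ^ k i
/-- Bernstein polynomial of order m for F on the simplex. -/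
noncomputable def bernsteinPoly (d m : ℕ) (F : (Fin d → ℝ) → ℝ) (x : Fin d → ℝ) : ℝ :=
  ∑ k ∈ grid d m, F (fun i => (k i : ℝ) / m) * Pw d m k x

/-!
Write `B_m F(x) - F(x) = ∑ₖ (F(k/m) - F(x)) P_{k,m}(x)`, an expectation over
`K ~ Multinomial(m, x)`. By uniform continuity, grid points within `δ` of `x` contribute at most
`ε/2`; the others are controlled Chebyshev-style by
`2C/δ² · E‖K/m - x‖² = 2C/δ² · ∑ᵢ xᵢ(1 - xᵢ)/m ≤ 2Cd/(4δ²m)`.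
The moments come from the generating function `∑ₖ P_{k,m}(x) (1+t)^{kᵢ} = (1 + t xᵢ)^m`, an
instance of the multinomial theorem: comparing coefficients of `t^j` gives
`E[(Kᵢ choose j)] = (m choose j) xᵢ^j`.
-/

lemma mem_grid {d m : ℕ} {k : Fin d → ℕ} : k ∈ grid d m ↔ ∑ i, k i ≤ m := by
  simp only [grid, mem_filter, mem_Icc, and_iff_right_iff_imp]
  exact fun hk => ⟨fun _ => Nat.zero_le _, fun i => (single_le_sum (fun _ _ => Nat.zero_le _)
    (mem_univ i)).trans hk⟩

lemma cast_multinomial_option_eq_div {d m : ℕ} {K : Option (Fin d) → ℕ} (hK : ∑ a, K a = m) :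
    (Nat.multinomial univ K : ℝ) =
      m.factorial / ((m - ∑ i, K (some i)).factorial * ∏ i, (K (some i)).factorial) := by
  rw [Fintype.sum_option] at hK
  have hspec := Nat.multinomial_spec univ K
  rw [Fintype.prod_option, Fintype.sum_option, hK, show K none = m - ∑ i, K (some i) by omega,
    mul_comm] at hspec
  rw [eq_div_iff (by positivity)]
  exact_mod_cast hspec

theorem add_sum_pow_eq_sum_grid {R : Type*} [CommSemiring R] [Algebra ℝ R] (d m : ℕ) (a : R)
    (y : Fin d → R) :
    (a + ∑ i, y i) ^ m = ∑ k ∈ grid d m,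
      ((m.factorial : ℝ) / ((m - ∑ i, k i).factorial * ∏ i, (k i).factorial)) •
        (a ^ (m - ∑ i, k i) * ∏ i, y i ^ k i) := by
  have hsplit : a + ∑ i, y i = ∑ o : Option (Fin d), o.elim a y := by
    simp [Fintype.sum_option]
  rw [hsplit, sum_pow_eq_sum_piAntidiag]
  refine sum_nbij' (fun K i => K (some i)) (fun k o => o.elim (m - ∑ i, k i) k) ?_ ?_ ?_ ?_ ?_
  · intro K hK
    simp only [mem_piAntidiag, Fintype.sum_option] at hK
    simp only [mem_grid]
    omega
  · intro k hk
    simp only [mem_grid] at hk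
    simp only [mem_piAntidiag, Fintype.sum_option, Option.elim, ne_eq, mem_univ,
      implies_true, and_true]
    omega
  · intro K hK
    simp only [mem_piAntidiag, Fintype.sum_option] at hK
    funext o
    cases o <;> simp only [Option.elim]
    omega
  · intro k _
    rfl
  · intro K hK
    simp only [mem_piAntidiag] at hK
    have hnone : K none = m - ∑ i, K (some i) := by
      rw [← hK.1, Fintype.sum_option]; omega
    rw [← cast_multinomial_option_eq_div hK.1, Nat.cast_smul_eq_nsmul, nsmul_eq_mul,
      Fintype.prod_option, hnone]
    rfl

open Polynomial in
lemma sum_C_Pw_mul_X_add_one_pow (d m : ℕ) (x : Fin d → ℝ) (i : Fin d) :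
    ∑ k ∈ grid d m, C (Pw d m k x) * (X + 1) ^ k i = (C (x i) * X + 1) ^ m := by
  have hsum : C (1 - ∑ j, x j) + ∑ j, C (x j) * (Pi.mulSingle i (X + 1) : Fin d → ℝ[X]) j =
      C (x i) * X + 1 := by
    have h : ∀ j, C (x j) * (Pi.mulSingle i (X + 1) : Fin d → ℝ[X]) j =
        C (x j) + (Pi.single i (C (x i) * X) : Fin d → ℝ[X]) j := by
      intro j
      rcases eq_or_ne j i with rfl | hj
      · simp only [Pi.mulSingle_eq_same, Pi.single_eq_same]; ring
      · simp [hj]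
    simp only [h, sum_add_distrib, sum_pi_single', mem_univ, if_true, ← map_sum, map_sub,
      map_one]
    ring
  rw [← hsum, add_sum_pow_eq_sum_grid]
  refine sum_congr rfl fun k _ => ?_
  have hprod : ∏ j, (Pi.mulSingle i (X + 1) : Fin d → ℝ[X]) j ^ k j = (X + 1) ^ k i := by
    simp [Pi.mulSingle_apply, ite_pow]
  simp only [mul_pow, prod_mul_distrib, hprod, Pw, smul_eq_C_mul, map_mul, map_pow, map_prod]
  ring

open Polynomial in
lemma sum_choose_mul_Pw (d m : ℕ) (x : Fin d → ℝ) (i : Fin d) (j : ℕ) :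
    ∑ k ∈ grid d m, ((k i).choose j : ℝ) * Pw d m k x = m.choose j * x i ^ j := by
  have h := congrArg (coeff · j) (sum_C_Pw_mul_X_add_one_pow d m x i)
  rw [show (C (x i) * X + 1) ^ m = ((X + 1) ^ m).comp (C (x i) * X) by simp [add_comp]] at h
  simp only [finsetSum_coeff, coeff_C_mul, coeff_X_add_one_pow, comp_C_mul_X_coeff] at h
  simpa only [mul_comm] using h

lemma sum_Pw_eq_one (d m : ℕ) (x : Fin d → ℝ) : ∑ k ∈ grid d m, Pw d m k x = 1 := by
  have h := add_sum_pow_eq_sum_grid d m (1 - ∑ i, x i) x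
  rw [sub_add_cancel, one_pow] at h
  rw [h]
  simp only [Pw, smul_eq_mul, mul_assoc]

lemma sum_sq_sub_mul_Pw {m : ℕ} (hm : m ≠ 0) (d : ℕ) (x : Fin d → ℝ) (i : Fin d) :
    ∑ k ∈ grid d m, ((k i : ℝ) / m - x i) ^ 2 * Pw d m k x = x i * (1 - x i) / m := by
  have h0 := sum_choose_mul_Pw d m x i 0
  have h1 := sum_choose_mul_Pw d m x i 1
  have h2 := sum_choose_mul_Pw d m x i 2
  simp only [Nat.choose_zero_right, Nat.choose_one_right, Nat.cast_choose_two, Nat.cast_one,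
    one_mul, pow_zero, pow_one] at h0 h1 h2
  have hm' : (m : ℝ) ≠ 0 := Nat.cast_ne_zero.2 hm
  calc ∑ k ∈ grid d m, ((k i : ℝ) / m - x i) ^ 2 * Pw d m k x
      = ∑ k ∈ grid d m, (2 / m ^ 2 * ((k i : ℝ) * (k i - 1) / 2 * Pw d m k x)
          + (1 / m ^ 2 - 2 * x i / m) * ((k i : ℝ) * Pw d m k x) + x i ^ 2 * Pw d m k x) := by
        refine sum_congr rfl fun k _ => ?_
        field_simp
        ring
    _ = x i * (1 - x i) / m := by
        rw [sum_add_distrib, sum_add_distrib, ← mul_sum, ← mul_sum, ← mul_sum, h0, h1, h2]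
        field_simp
        ring

lemma Pw_nonneg {d : ℕ} (m : ℕ) (k : Fin d → ℕ) {x : Fin d → ℝ} (hx : x ∈ simplexSet d) :
    0 ≤ Pw d m k x := by
  obtain ⟨hx01, hsum⟩ := hx
  exact mul_nonneg (mul_nonneg (by positivity) (pow_nonneg (sub_nonneg.2 hsum) _))
    (prod_nonneg fun i _ => pow_nonneg (hx01 i).1 _)

lemma isCompact_simplexSet (d : ℕ) : IsCompact (simplexSet d) := by
  have h : simplexSet d = Set.univ.pi (fun _ => Set.Icc 0 1) ∩ {x | ∑ i, x i ≤ 1} := by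
    ext x
    simp only [Set.mem_inter_iff, Set.mem_univ_pi, Set.mem_Icc]
    rfl
  rw [h]
  exact (isCompact_univ_pi fun _ => isCompact_Icc).inter_right
    (isClosed_le (continuous_finsetSum _ fun i _ => continuous_apply i) continuous_const)

lemma div_mem_simplexSet {d m : ℕ} {k : Fin d → ℕ} (hk : k ∈ grid d m) (hm : m ≠ 0) :
    (fun i => (k i : ℝ) / m) ∈ simplexSet d := by
  have hm' : (0 : ℝ) < m := by positivity
  rw [mem_grid] at hk
  refine ⟨fun i => ⟨by positivity, ?_⟩, ?_⟩
  · rw [div_le_one hm']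
    exact_mod_cast (single_le_sum (fun _ _ => Nat.zero_le _) (mem_univ i)).trans hk
  · rw [← sum_div, div_le_one hm']
    exact_mod_cast hk

lemma sq_dist_le_sum_sq_sub {ι : Type*} [Fintype ι] (y x : ι → ℝ) :
    dist y x ^ 2 ≤ ∑ i, (y i - x i) ^ 2 := by
  rw [← Real.le_sqrt dist_nonneg (sum_nonneg fun i _ => sq_nonneg _)]
  refine (dist_pi_le_iff (Real.sqrt_nonneg _)).2 fun i => ?_
  rw [Real.dist_eq]
  exact Real.abs_le_sqrt
    (single_le_sum (f := fun j => (y j - x j) ^ 2) (fun j _ => sq_nonneg _) (mem_univ i))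

lemma abs_sub_le_add_mul_sum_sq_sub {ι : Type*} [Fintype ι] {s : Set (ι → ℝ)} {f : (ι → ℝ) → ℝ}
    {ε δ C : ℝ} (hδ : 0 < δ) (hclose : ∀ y ∈ s, ∀ x ∈ s, dist y x < δ → dist (f y) (f x) < ε)
    (hbound : ∀ y ∈ s, ‖f y‖ ≤ C) {x y : ι → ℝ} (hx : x ∈ s) (hy : y ∈ s) :
    |f y - f x| ≤ ε + 2 * C / δ ^ 2 * ∑ i, (y i - x i) ^ 2 := by
  have hε : 0 < ε := by simpa using hclose x hx x hx (by simpa using hδ)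
  have hC : 0 ≤ C := (norm_nonneg _).trans (hbound x hx)
  have hS : 0 ≤ ∑ i, (y i - x i) ^ 2 := sum_nonneg fun i _ => sq_nonneg _
  by_cases hyx : dist y x < δ
  · have hnear := hclose y hy x hx hyx
    rw [Real.dist_eq] at hnear
    have hpenalty : 0 ≤ 2 * C / δ ^ 2 * ∑ i, (y i - x i) ^ 2 := by positivity
    linarith
  · have h2C : |f y - f x| ≤ 2 * C := by
      have hsum := add_le_add (hbound y hy) (hbound x hx)
      rw [Real.norm_eq_abs, Real.norm_eq_abs] at hsum
      linarith [abs_sub (f y) (f x)]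
    have hfar : 2 * C ≤ 2 * C / δ ^ 2 * ∑ i, (y i - x i) ^ 2 := by
      rw [div_mul_eq_mul_div, le_div_iff₀ (by positivity)]
      have hδ_sq : δ ^ 2 ≤ ∑ i, (y i - x i) ^ 2 :=
        (pow_le_pow_left₀ hδ.le (not_lt.1 hyx) 2).trans (sq_dist_le_sum_sq_sub y x)
      exact mul_le_mul_of_nonneg_left hδ_sq (by positivity)
    linarith

lemma abs_bernsteinPoly_sub_le {d m : ℕ} (hm : m ≠ 0) {F : (Fin d → ℝ) → ℝ} {x : Fin d → ℝ}
    (hx : x ∈ simplexSet d) {a b : ℝ} (hb : 0 ≤ b)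
    (hF : ∀ y ∈ simplexSet d, |F y - F x| ≤ a + b * ∑ i, (y i - x i) ^ 2) :
    |bernsteinPoly d m F x - F x| ≤ a + b * d / 4 / m := by
  have hvar : ∑ i, x i * (1 - x i) ≤ d / 4 :=
    calc ∑ i, x i * (1 - x i) ≤ ∑ _i : Fin d, (1 / 4 : ℝ) :=
          sum_le_sum fun i _ => by nlinarith [sq_nonneg (x i - 1 / 2)]
      _ = d / 4 := by simp [div_eq_mul_inv]
  calc |bernsteinPoly d m F x - F x|
      = |∑ k ∈ grid d m, (F (fun i => (k i : ℝ) / m) - F x) * Pw d m k x| := by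
        simp only [bernsteinPoly, sub_mul, sum_sub_distrib, ← mul_sum, sum_Pw_eq_one, mul_one]
    _ ≤ ∑ k ∈ grid d m, (a + b * ∑ i, ((k i : ℝ) / m - x i) ^ 2) * Pw d m k x := by
        refine (abs_sum_le_sum_abs _ _).trans (sum_le_sum fun k hk => ?_)
        rw [abs_mul, abs_of_nonneg (Pw_nonneg m k hx)]
        exact mul_le_mul_of_nonneg_right (hF _ (div_mem_simplexSet hk hm)) (Pw_nonneg m k hx)
    _ = a + b * ∑ i, x i * (1 - x i) / m := by
        simp only [add_mul, sum_add_distrib, ← mul_sum, sum_Pw_eq_one, mul_one, mul_assoc, sum_mul]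
        rw [sum_comm]
        simp only [sum_sq_sub_mul_Pw hm]
    _ ≤ a + b * (d / 4 / m) := by
        rw [← sum_div]
        gcongr
    _ = a + b * d / 4 / m := by ring

/-- Weierstrass-type uniform convergence of Bernstein polynomials on the simplex. -/
theorem bernstein_poly_uniform_convergence (d : ℕ) (F : (Fin d → ℝ) → ℝ)
    (hF : ContinuousOn F (simplexSet d)) :
    ∀ ε > (0 : ℝ), ∃ M : ℕ, ∀ m : ℕ, M ≤ m → ∀ x ∈ simplexSet d,
      |bernsteinPoly d m F x - F x| ≤ ε := by
  intro ε hε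
  obtain ⟨δ, hδ, hclose⟩ := Metric.uniformContinuousOn_iff.1
    ((isCompact_simplexSet d).uniformContinuousOn_of_continuous hF) (ε / 2) (half_pos hε)
  obtain ⟨C, hC⟩ := (isCompact_simplexSet d).exists_bound_of_continuousOn hF
  obtain ⟨M, hM⟩ := Filter.eventually_atTop.1 <|
    ((tendsto_const_div_atTop_nhds_zero_nat (2 * C / δ ^ 2 * d / 4)).eventually
      (ge_mem_nhds (half_pos hε))).and (Filter.eventually_ge_atTop 1)
  refine ⟨M, fun m hm x hx => ?_⟩
  obtain ⟨hsmall, hm1⟩ := hM m hm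
  have hC0 : 0 ≤ C := (norm_nonneg _).trans (hC x hx)
  calc |bernsteinPoly d m F x - F x| ≤ ε / 2 + 2 * C / δ ^ 2 * d / 4 / m :=
        abs_bernsteinPoly_sub_le (by omega) hx (by positivity) fun y hy =>
          abs_sub_le_add_mul_sum_sq_sub hδ hclose hC hx hy
    _ ≤ ε := by linarith
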